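/- Let P be a polymatroid of rank r on [m] with rk_P({m}) = r, and define integers a_k (for k ∈ ℤ_{≥0}^m with |k| ≤ r) by the expansion Σ_{k ∈ I(P)∩ℤ^m} t^{(k)} = Σ_k (−1)^{r−|k|} a_k t^{[k]} in ℚ[t_1,…,t_m]. Then, in ℚ[t_1,…,t_m,t_0], Σ_k a_k t^k t_0^{r−|k|} = Σ_{k ∈ B(P)∩ℤ^m} t_m^{k_m} · Π_{i=1}^{m−1} f_i(k), where f_i(k) = t_i^{k_i} + t_0·t_i^{k_i−1} if k_i ≥ 1 and f_i(k) = 1 if k_i = 0. -/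

import Mathlib

open MvPolynomial Finset

/-- The rank-function axioms of a polymatroid on a finite ground set. -/
def IsPolymatroid {α : Type*} [Fintype α] [DecidableEq α] (rk : Finset α → ℕ) : Prop :=
  rk ∅ = 0 ∧ (∀ I J : Finset α, I ⊆ J → rk I ≤ rk J) ∧
    ∀ I J : Finset α, rk (I ∩ J) + rk (I ∪ J) ≤ rk I + rk J

/-- The base polytope `B(P)` of a polymatroid. -/
def basePolytope {α : Type*} [Fintype α] (rk : Finset α → ℕ) : Set (α → ℝ) :=
  {x | (∀ i, 0 ≤ x i) ∧ (∑ i, x i) = (rk Finset.univ : ℝ) ∧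
      ∀ I : Finset α, (∑ i ∈ I, x i) ≤ (rk I : ℝ)}

/-- The independence polytope `I(P)` of a polymatroid. -/
def indepPolytope {α : Type*} [Fintype α] (rk : Finset α → ℕ) : Set (α → ℝ) :=
  {x | (∀ i, 0 ≤ x i) ∧ ∀ I : Finset α, (∑ i ∈ I, x i) ≤ (rk I : ℝ)}

/-- `binomLower p k` is `p^{(k)} = binom(p + k - 1, k) = p(p+1)⋯(p+k-1)/k!`. -/
noncomputable def binomLower {σ K : Type*} [Field K] (p : MvPolynomial σ K) (k : ℕ) :
    MvPolynomial σ K :=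
  (k.factorial : K)⁻¹ • ∏ j ∈ Finset.range k, (p + MvPolynomial.C (j : K))

/-- `binomUpper p k` is `p^{[k]} = binom(p + k, k) = (p+1)(p+2)⋯(p+k)/k!`. -/
noncomputable def binomUpper {σ K : Type*} [Field K] (p : MvPolynomial σ K) (k : ℕ) :
    MvPolynomial σ K :=
  (k.factorial : K)⁻¹ • ∏ j ∈ Finset.range k, (p + MvPolynomial.C ((j : K) + 1))

/-!
Since `t^{(k)} = t^{[k]} - t^{[k-1]}`, expanding `Σ_{κ ∈ I(P)} t^{(κ)}` shows that the coefficient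
of `t^{[λ]}` is `Σ_S (-1)^{|S|}` over the sets `S` with `λ + 1_S ∈ I(P)`. Because the last element
`e` has full rank, independence of `λ + 1_S` only depends on `S ∖ {e}` and on `|λ| + |S| ≤ r`, so
pairing `T` with `T ∪ {e}` cancels everything except the sets `T ∌ e` with `λ + 1_T ∈ B(P)`.
By linear independence of the `t^{[λ]}`, `a_λ` is the number of such `T`. On the other side,
expanding each `f_i(β) = t_i^{β_i} + t₀ t_i^{β_i - 1}` chooses the set `T` of factors that
contribute `t₀`, and the substitution `β = λ + 1_T` turns both sides into the same double sum.
-/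

section BinomPolynomials

variable {σ K : Type*} [Field K] [CharZero K]

theorem binomLower_succ (p : MvPolynomial σ K) (k : ℕ) :
    binomLower p (k + 1) = binomUpper p (k + 1) - binomUpper p k := by
  have hfac : (C ((k + 1).factorial : K)⁻¹ : MvPolynomial σ K) * C ((k : K) + 1) =
      C (k.factorial : K)⁻¹ := by
    rw [← map_mul, Nat.factorial_succ]
    push_cast
    field_simp
  rw [binomLower, binomUpper, binomUpper, prod_range_succ', prod_range_succ]
  simp only [smul_eq_C_mul, Nat.cast_zero, map_zero, add_zero, Nat.cast_add, Nat.cast_one, ← hfac]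
  ring

omit [CharZero K] in
theorem eval_binomUpper_X (q : σ → K) (i : σ) (k : ℕ) :
    eval q (binomUpper (X i) k) = (k.factorial : K)⁻¹ * ∏ j ∈ range k, (q i + j + 1) := by
  simp [binomUpper, smul_eq_C_mul, add_assoc]

omit [CharZero K] in
theorem eval_binomUpper_X_eq_zero {q : σ → K} {i : σ} {n k : ℕ} (hq : q i = -(n + 1))
    (hnk : n < k) : eval q (binomUpper (X i) k) = 0 := by
  rw [eval_binomUpper_X, prod_eq_zero (mem_range.mpr hnk) (by rw [hq]; ring), mul_zero]

theorem eval_binomUpper_X_ne_zero {q : σ → K} {i : σ} {k : ℕ} (hq : q i = -(k + 1)) :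
    eval q (binomUpper (X i) k) ≠ 0 := by
  rw [eval_binomUpper_X, hq]
  refine mul_ne_zero (by simp [Nat.factorial_ne_zero]) (prod_ne_zero_iff.mpr fun j hj => ?_)
  rw [show -((k : K) + 1) + j + 1 = j - k by ring, sub_ne_zero]
  exact_mod_cast (mem_range.mp hj).ne

theorem linearIndependent_prod_binomUpper_X [Fintype σ] :
    LinearIndependent K (fun κ : σ → ℕ => ∏ i, binomUpper (X i : MvPolynomial σ K) (κ i)) := by
  classical
  rw [linearIndependent_iff']
  intro s c hsum κ hκ
  by_contra hc
  obtain ⟨κ₀, hκ₀⟩ := (s.filter (c · ≠ 0)).exists_minimal ⟨κ, mem_filter.mpr ⟨hκ, hc⟩⟩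
  have hκ₀s := mem_filter.mp hκ₀.1
  -- At `-κ₀ - 1`, with `κ₀` minimal in the support, every other term has a factor
  -- `binomUpper (X i) (κ i)` with `κ₀ i < κ i`, which vanishes there.
  have heval := congrArg (eval fun i => -((κ₀ i : K) + 1)) hsum
  rw [map_sum, map_zero, sum_eq_single κ₀ ?_ (fun h => absurd hκ₀s.1 h)] at heval
  · rw [smul_eq_C_mul, map_mul, eval_C, map_prod] at heval
    refine mul_ne_zero hκ₀s.2 (prod_ne_zero_iff.mpr fun i _ => ?_) heval
    exact eval_binomUpper_X_ne_zero (k := κ₀ i) rfl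
  · intro κ' hκ' hne
    by_cases hc' : c κ' = 0
    · simp [hc']
    obtain ⟨i, hi⟩ : ∃ i, κ₀ i < κ' i := by
      by_contra! hle
      exact hκ₀.not_lt (mem_filter.mpr ⟨hκ', hc'⟩) (lt_of_le_of_ne hle hne)
    rw [smul_eq_C_mul, map_mul, map_prod]
    exact mul_eq_zero_of_right _ (prod_eq_zero (mem_univ i) (eval_binomUpper_X_eq_zero rfl hi))

end BinomPolynomials

theorem le_const_of_sum_le {ι : Type*} [Fintype ι] {κ : ι → ℕ} {n : ℕ} (h : ∑ i, κ i ≤ n) :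
    κ ≤ fun _ => n :=
  fun i => (single_le_sum (fun _ _ => Nat.zero_le _) (mem_univ i)).trans h

theorem finsum_cond_eq_sum_Iic_filter {α M : Type*} [Preorder α] [LocallyFiniteOrderBot α]
    [AddCommMonoid M] {b : α} {p : α → Prop} [DecidablePred p] (hp : ∀ x, p x → x ≤ b)
    (f : α → M) : ∑ᶠ (x) (_ : p x), f x = ∑ x ∈ Iic b with p x, f x :=
  finsum_cond_eq_sum_of_cond_iff f fun {x} _ => by simpa using fun h => hp x h

section Indicator

variable {σ : Type*} [DecidableEq σ]

def indicatorOne (T : Finset σ) (i : σ) : ℕ := if i ∈ T then 1 else 0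

theorem indicatorOne_le_iff {T : Finset σ} {κ : σ → ℕ} :
    indicatorOne T ≤ κ ↔ ∀ i ∈ T, κ i ≠ 0 := by
  refine ⟨fun h i hi => ?_, fun h i => ?_⟩
  · simpa [indicatorOne, hi, Nat.one_le_iff_ne_zero] using h i
  · by_cases hi : i ∈ T <;> simp [indicatorOne, hi, Nat.one_le_iff_ne_zero, h]

theorem prod_add_mul_pred_eq_sum {R : Type*} [CommSemiring R] (s : Finset σ)
    (F : σ → ℕ → R) (c : R) (κ : σ → ℕ) :
    ∏ i ∈ s, ((if κ i = 0 then 0 else c * F i (κ i - 1)) + F i (κ i)) =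
      ∑ T ∈ {i ∈ s | κ i ≠ 0}.powerset, c ^ #T * ∏ i ∈ s, F i ((κ - indicatorOne T) i) := by
  rw [prod_add, ← sum_subset (powerset_mono.mpr (filter_subset (κ · ≠ 0) s))]
  · refine sum_congr rfl fun T hT => ?_
    have hTs : T ⊆ s := (mem_powerset.mp hT).trans (filter_subset _ s)
    have hpos : ∀ i ∈ T, κ i ≠ 0 := fun i hi => (mem_filter.mp (mem_powerset.mp hT hi)).2
    have hprodT : ∏ i ∈ T, (if κ i = 0 then 0 else c * F i (κ i - 1)) =
        c ^ #T * ∏ i ∈ T, F i ((κ - indicatorOne T) i) := by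
      rw [prod_congr rfl fun i hi => if_neg (hpos i hi), prod_mul_distrib, prod_const]
      refine congrArg _ (prod_congr rfl fun i hi => ?_)
      simp [indicatorOne, hi]
    have hprod_sdiff : ∏ i ∈ s \ T, F i (κ i) = ∏ i ∈ s \ T, F i ((κ - indicatorOne T) i) :=
      prod_congr rfl fun i hi => by simp [indicatorOne, (mem_sdiff.mp hi).2]
    rw [hprodT, hprod_sdiff, ← prod_sdiff hTs]
    ring
  · intro T hTs hT
    obtain ⟨i, hi, hi0⟩ := not_subset.mp (mt mem_powerset.mpr hT)
    have hi0 : κ i = 0 := by simpa [mem_powerset.mp hTs hi] using hi0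
    exact mul_eq_zero_of_left (prod_eq_zero hi (by simp [hi0])) _

variable [Fintype σ]

theorem sum_sum_tsub_indicatorOne_eq {M : Type*} [AddCommMonoid M] {b : σ → ℕ}
    {p : (σ → ℕ) → Prop} [DecidablePred p] (hp : ∀ κ, p κ → κ ≤ b)
    (s : Finset σ) (g : Finset σ → (σ → ℕ) → M) :
    ∑ κ ∈ Iic b with p κ, ∑ S ∈ {i ∈ s | κ i ≠ 0}.powerset, g S (κ - indicatorOne S) =
      ∑ l ∈ Iic b, ∑ S ∈ s.powerset with p (l + indicatorOne S), g S l := by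
  have hsupp : ∀ κ : σ → ℕ, {i ∈ s | κ i ≠ 0}.powerset = {S ∈ s.powerset | ∀ i ∈ S, κ i ≠ 0} :=
    fun κ => by ext S; simp [subset_iff, forall_and]
  simp_rw [hsupp, sum_filter (s := s.powerset)]
  rw [sum_comm, sum_comm (s := Iic b)]
  refine sum_congr rfl fun S _ => ?_
  rw [← sum_filter, ← sum_filter, filter_filter]
  refine sum_nbij' (· - indicatorOne S) (· + indicatorOne S) ?_ ?_ ?_ ?_ ?_
  · intro κ hκ
    simp only [mem_filter, mem_Iic] at hκ ⊢
    refine ⟨tsub_le_self.trans hκ.1, ?_⟩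
    rw [tsub_add_cancel_of_le (indicatorOne_le_iff.mpr hκ.2.2)]
    exact hκ.2.1
  · intro l hl
    simp only [mem_filter, mem_Iic] at hl ⊢
    exact ⟨hp _ hl.2, hl.2, indicatorOne_le_iff.mp le_add_self⟩
  · intro κ hκ
    simp only [mem_filter] at hκ
    exact tsub_add_cancel_of_le (indicatorOne_le_iff.mpr hκ.2.2)
  · intro l _
    exact add_tsub_cancel_right l _
  · intro κ _
    rfl

end Indicator

theorem prod_binomLower_X_eq_sum {σ K : Type*} [Field K] [CharZero K] [Fintype σ]
    [DecidableEq σ] (κ : σ → ℕ) :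
    ∏ i, binomLower (X i : MvPolynomial σ K) (κ i) =
      ∑ S ∈ ({i | κ i ≠ 0} : Finset σ).powerset,
        (-1) ^ #S * ∏ i, binomUpper (X i) ((κ - indicatorOne S) i) := by
  refine (prod_congr rfl fun i _ => ?_).trans
    (prod_add_mul_pred_eq_sum univ (fun i k => binomUpper (X i : MvPolynomial σ K) k) (-1) κ)
  rcases κ i with _ | k
  · simp [binomLower, binomUpper]
  · rw [binomLower_succ]
    simp [sub_eq_neg_add]

section LatticePoints

variable {σ : Type*} [Fintype σ]

def IsIndepPoint (rk : Finset σ → ℕ) (κ : σ → ℕ) : Prop := ∀ I : Finset σ, ∑ i ∈ I, κ i ≤ rk I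

def IsBasePoint (rk : Finset σ → ℕ) (κ : σ → ℕ) : Prop :=
  ∑ i, κ i = rk univ ∧ IsIndepPoint rk κ

variable {rk : Finset σ → ℕ} {κ : σ → ℕ}

theorem natCast_mem_indepPolytope_iff :
    (fun i => (κ i : ℝ)) ∈ indepPolytope rk ↔ IsIndepPoint rk κ := by
  simp [indepPolytope, IsIndepPoint, ← Nat.cast_sum]

theorem natCast_mem_basePolytope_iff :
    (fun i => (κ i : ℝ)) ∈ basePolytope rk ↔ IsBasePoint rk κ := by
  simp [basePolytope, IsBasePoint, IsIndepPoint, ← Nat.cast_sum]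

theorem IsIndepPoint.le (h : IsIndepPoint rk κ) : κ ≤ fun _ => rk univ :=
  le_const_of_sum_le (h univ)

theorem IsBasePoint.le (h : IsBasePoint rk κ) : κ ≤ fun _ => rk univ := h.2.le

theorem rk_eq_of_mem (hmono : ∀ I J : Finset σ, I ⊆ J → rk I ≤ rk J) {e : σ}
    (he : rk {e} = rk univ) {I : Finset σ} (hI : e ∈ I) : rk I = rk univ :=
  le_antisymm (hmono _ _ (subset_univ I)) (he ▸ hmono _ _ (singleton_subset_iff.mpr hI))

variable [DecidableEq σ]

theorem sum_add_indicatorOne (κ : σ → ℕ) (T : Finset σ) :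
    ∑ i, (κ + indicatorOne T) i = ∑ i, κ i + #T := by
  simp [indicatorOne, sum_add_distrib]

open scoped Classical in
noncomputable def baseLifts (rk : Finset σ → ℕ) (e : σ) (l : σ → ℕ) : Finset (Finset σ) :=
  {T ∈ (univ.erase e).powerset | IsBasePoint rk (l + indicatorOne T)}

theorem sum_add_card_of_mem_baseLifts {e : σ} {l : σ → ℕ} {T : Finset σ}
    (hT : T ∈ baseLifts rk e l) : ∑ i, l i + #T = rk univ := by
  classical
  rw [← sum_add_indicatorOne, ← (mem_filter.mp hT).2.1]

variable {e : σ} (hfull : ∀ I : Finset σ, e ∈ I → rk I = rk univ)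
include hfull

theorem isIndepPoint_iff_of_full :
    IsIndepPoint rk κ ↔ ∑ i, κ i ≤ rk univ ∧ ∀ I : Finset σ, e ∉ I → ∑ i ∈ I, κ i ≤ rk I := by
  refine ⟨fun h => ⟨h univ, fun I _ => h I⟩, fun ⟨hsum, h⟩ I => ?_⟩
  by_cases hI : e ∈ I
  · exact hfull I hI ▸ (sum_le_sum_of_subset (subset_univ I)).trans hsum
  · exact h I hI

open scoped Classical in
theorem sum_filter_isIndepPoint_neg_one_pow {R : Type*} [CommRing R] (l : σ → ℕ) :
    ∑ S ∈ univ.powerset with IsIndepPoint rk (l + indicatorOne S), (-1 : R) ^ #S =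
      (-1) ^ (rk univ - ∑ i, l i) * #(baseLifts rk e l) := by
  have huniv : (univ : Finset σ) = insert e (univ.erase e) := (insert_erase (mem_univ e)).symm
  rw [sum_filter, huniv, sum_powerset_insert (notMem_erase e univ), ← sum_add_distrib, ← huniv,
    baseLifts, card_filter, Nat.cast_sum, mul_sum]
  simp only [Nat.cast_ite, Nat.cast_one, Nat.cast_zero]
  refine sum_congr rfl fun T hT => ?_
  have heT : e ∉ T := fun h => notMem_erase e univ (mem_powerset.mp hT h)
  have hoff : ∀ I : Finset σ, e ∉ I →
      ∑ i ∈ I, (l + indicatorOne (insert e T)) i = ∑ i ∈ I, (l + indicatorOne T) i :=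
    fun I hI => sum_congr rfl fun i hi => by
      simp [indicatorOne, show i ≠ e from fun h => hI (h ▸ hi)]
  have hQ : (∀ I : Finset σ, e ∉ I → ∑ i ∈ I, (l + indicatorOne (insert e T)) i ≤ rk I) ↔
      ∀ I : Finset σ, e ∉ I → ∑ i ∈ I, (l + indicatorOne T) i ≤ rk I :=
    forall₂_congr fun I hI => by rw [hoff I hI]
  rw [isIndepPoint_iff_of_full hfull, isIndepPoint_iff_of_full hfull, IsBasePoint,
    isIndepPoint_iff_of_full hfull, sum_add_indicatorOne, sum_add_indicatorOne,
    card_insert_of_notMem heT, hQ]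
  generalize (∀ I : Finset σ, e ∉ I → ∑ i ∈ I, (l + indicatorOne T) i ≤ rk I) = Q
  by_cases hq : Q
  · simp only [hq, and_true]
    split_ifs <;> first
      | (exfalso; omega)
      | (rw [show rk univ - ∑ i, l i = #T by omega]; ring)
      | ring
  · simp [hq]

end LatticePoints

theorem LinearIndependent.eq_of_sum_smul_eq {ι R M : Type*} [Ring R] [AddCommGroup M]
    [Module R M] {v : ι → M} (hv : LinearIndependent R v) {s : Finset ι} {f g : ι → R}
    (h : ∑ i ∈ s, f i • v i = ∑ i ∈ s, g i • v i) {i : ι} (hi : i ∈ s) : f i = g i := by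
  rw [← sub_eq_zero, ← sum_sub_distrib] at h
  simp_rw [← sub_smul] at h
  exact sub_eq_zero.mp (linearIndependent_iff'.mp hv s (fun i => f i - g i) h i hi)

section BinomialExpansion

variable {σ K : Type*} [Field K] [CharZero K] [Fintype σ] [DecidableEq σ]
  {rk : Finset σ → ℕ} {e : σ} (hfull : ∀ I : Finset σ, e ∈ I → rk I = rk univ)
include hfull

theorem finsum_indepPoint_prod_binomLower :
    ∑ᶠ (κ : σ → ℕ) (_ : (fun i => (κ i : ℝ)) ∈ indepPolytope rk),
        ∏ i, binomLower (X i : MvPolynomial σ K) (κ i) =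
      ∑ l ∈ Iic fun _ => rk univ,
        ((-1 : K) ^ (rk univ - ∑ i, l i) * #(baseLifts rk e l)) • ∏ i, binomUpper (X i) (l i) := by
  classical
  simp only [natCast_mem_indepPolytope_iff]
  rw [finsum_cond_eq_sum_Iic_filter fun κ h => IsIndepPoint.le h]
  simp only [prod_binomLower_X_eq_sum]
  rw [sum_sum_tsub_indicatorOne_eq (fun κ h => IsIndepPoint.le h) univ
    fun S l => (-1) ^ #S * ∏ i, binomUpper (X i : MvPolynomial σ K) (l i)]
  refine sum_congr rfl fun l _ => ?_
  rw [← sum_mul, sum_filter_isIndepPoint_neg_one_pow hfull, smul_eq_C_mul]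
  simp

theorem eq_card_baseLifts_of_finsum_eq (a : (σ → ℕ) → ℤ)
    (ha : ∑ᶠ (κ : σ → ℕ) (_ : (fun i => (κ i : ℝ)) ∈ indepPolytope rk),
        ∏ i, binomLower (X i : MvPolynomial σ K) (κ i) =
      ∑ᶠ (κ : σ → ℕ) (_ : ∑ i, κ i ≤ rk univ),
        C ((-1 : K) ^ (rk univ - ∑ i, κ i) * (a κ : K)) * ∏ i, binomUpper (X i) (κ i))
    {l : σ → ℕ} (hl : ∑ i, l i ≤ rk univ) : a l = #(baseLifts rk e l) := by
  have hite : ∀ κ : σ → ℕ,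
      (if ∑ i, κ i ≤ rk univ then
        C ((-1 : K) ^ (rk univ - ∑ i, κ i) * (a κ : K)) * ∏ i, binomUpper (X i) (κ i) else 0) =
      (if ∑ i, κ i ≤ rk univ then (-1 : K) ^ (rk univ - ∑ i, κ i) * (a κ : K) else 0) •
        ∏ i, binomUpper (X i) (κ i) := fun κ => by
    split_ifs <;> simp [smul_eq_C_mul]
  rw [finsum_indepPoint_prod_binomLower hfull,
    finsum_cond_eq_sum_Iic_filter fun κ => le_const_of_sum_le, sum_filter,
    sum_congr rfl fun κ _ => hite κ] at ha
  have h := linearIndependent_prod_binomUpper_X.eq_of_sum_smul_eq ha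
    (mem_Iic.mpr (le_const_of_sum_le hl))
  rw [if_pos hl] at h
  exact_mod_cast (mul_right_injective₀ (pow_ne_zero _ (neg_ne_zero.mpr one_ne_zero))) h.symm

end BinomialExpansion

theorem monomial_cons_eq {R : Type*} [CommSemiring R] {n : ℕ} (d : ℕ) (κ : Fin n → ℕ)
    (c : R) :
    monomial (Finsupp.equivFunOnFinite.symm (Fin.cons d κ)) c =
      C c * X 0 ^ d * ∏ i, X i.succ ^ κ i := by
  rw [monomial_eq, Finsupp.prod_fintype _ _ fun i => pow_zero _, Fin.prod_univ_succ]
  simp [mul_assoc]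

theorem finsum_monomial_card_baseLifts {R : Type*} [CommSemiring R] {n : ℕ}
    (rk : Finset (Fin n) → ℕ) (e : Fin n) :
    ∑ᶠ (κ : Fin n → ℕ) (_ : ∑ i, κ i ≤ rk univ),
        monomial (Finsupp.equivFunOnFinite.symm (Fin.cons (rk univ - ∑ i, κ i) κ))
          (#(baseLifts rk e κ) : R) =
      ∑ l ∈ Iic fun _ => rk univ,
        ∑ T ∈ baseLifts rk e l, X 0 ^ #T * ∏ i, X i.succ ^ l i := by
  rw [finsum_cond_eq_sum_Iic_filter fun κ => le_const_of_sum_le, sum_filter]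
  refine sum_congr rfl fun l _ => ?_
  split_ifs with hl
  · have hcard : ∀ T ∈ baseLifts rk e l, #T = rk univ - ∑ i, l i := fun T hT => by
      rw [← sum_add_card_of_mem_baseLifts hT, Nat.add_sub_cancel_left]
    rw [monomial_cons_eq, sum_congr (s₁ := baseLifts rk e l) rfl fun T hT => by rw [hcard T hT],
      sum_const, nsmul_eq_mul, map_natCast, mul_assoc]
  · refine (sum_eq_zero fun T hT => ?_).symm
    exact absurd (sum_add_card_of_mem_baseLifts hT ▸ Nat.le_add_right _ _) hl

theorem X_last_pow_mul_prod_eq_sum {R : Type*} [CommSemiring R] {m : ℕ}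
    (β : Fin (m + 1) → ℕ) :
    (X (Fin.last m).succ : MvPolynomial (Fin (m + 2)) R) ^ β (Fin.last m) *
        ∏ j : Fin m, (if β j.castSucc = 0 then 1
          else X j.castSucc.succ ^ β j.castSucc + X 0 * X j.castSucc.succ ^ (β j.castSucc - 1)) =
      ∑ T ∈ {i ∈ univ.erase (Fin.last m) | β i ≠ 0}.powerset,
        X 0 ^ #T * ∏ i, X i.succ ^ (β - indicatorOne T) i := by
  have herase : univ.erase (Fin.last m) = univ.map Fin.castSuccEmb := by
    ext i
    simp [Fin.exists_castSucc_eq]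
  set G : Fin (m + 1) → MvPolynomial (Fin (m + 2)) R :=
    fun i => (if β i = 0 then 0 else X 0 * X i.succ ^ (β i - 1)) + X i.succ ^ β i with hG
  have hfactor : ∀ j : Fin m, (if β j.castSucc = 0 then 1
      else X j.castSucc.succ ^ β j.castSucc + X 0 * X j.castSucc.succ ^ (β j.castSucc - 1)) =
      G j.castSucc := fun j => by
    split_ifs with h
    · simp [G, h]
    · simp [G, h, add_comm]
  have hprod : ∏ j : Fin m, G j.castSucc = ∏ i ∈ univ.erase (Fin.last m), G i := by
    rw [herase, prod_map]
    rfl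
  rw [prod_congr rfl fun j _ => hfactor j, hprod, hG,
    prod_add_mul_pred_eq_sum _ (fun i k => X i.succ ^ k) (X 0) β, mul_sum]
  refine sum_congr rfl fun T hT => ?_
  have hlast : (β - indicatorOne T) (Fin.last m) = β (Fin.last m) := by
    have : Fin.last m ∉ T := fun h => notMem_erase _ _ (filter_subset _ _ (mem_powerset.mp hT h))
    simp [indicatorOne, this]
  rw [← prod_erase_mul univ _ (mem_univ (Fin.last m)), hlast]
  ring

theorem finsum_basePoint_prod_eq {R : Type*} [CommSemiring R] {m : ℕ}
    (rk : Finset (Fin (m + 1)) → ℕ) :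
    ∑ᶠ (β : Fin (m + 1) → ℕ) (_ : (fun i => (β i : ℝ)) ∈ basePolytope rk),
        (X (Fin.last m).succ : MvPolynomial (Fin (m + 2)) R) ^ β (Fin.last m) *
          ∏ j : Fin m, (if β j.castSucc = 0 then 1
            else X j.castSucc.succ ^ β j.castSucc + X 0 * X j.castSucc.succ ^ (β j.castSucc - 1)) =
      ∑ l ∈ Iic fun _ => rk univ,
        ∑ T ∈ baseLifts rk (Fin.last m) l, X 0 ^ #T * ∏ i, X i.succ ^ l i := by
  classical
  simp only [natCast_mem_basePolytope_iff]
  rw [finsum_cond_eq_sum_Iic_filter fun β h => IsBasePoint.le h]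
  simp only [X_last_pow_mul_prod_eq_sum]
  rw [sum_sum_tsub_indicatorOne_eq (fun β h => IsBasePoint.le h) (univ.erase (Fin.last m))
    fun T (l : Fin (m + 1) → ℕ) => (X 0 : MvPolynomial (Fin (m + 2)) R) ^ #T * ∏ i, X i.succ ^ l i]
  rfl

/-- For a polymatroid `P` of rank `r` on the ground set `{0, …, m}` (of size `m + 1`) whose last
element has full rank `r`, with `a_κ` defined by
`Σ_{κ ∈ I(P)∩ℤ^{m+1}} t^{(κ)} = Σ_κ (-1)^{r-|κ|} a_κ t^{[κ]}`, one has, in the polynomial ring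
`ℚ[t_0, t_1, …, t_m, t_{m+1}]` (where variable `0` is the auxiliary homogenizing variable `t₀`
and variable `j.succ` corresponds to the ground set element `j`):
`Σ_κ a_κ t^κ t₀^{r-|κ|} = Σ_{κ ∈ B(P)∩ℤ^{m+1}} t_last^{κ_last} · Π_{j ≠ last} f_j(κ)`, where
`f_j(κ) = t_j^{κ_j} + t₀ t_j^{κ_j - 1}` if `κ_j ≥ 1` and `f_j(κ) = 1` if `κ_j = 0`. -/
theorem homogenized_transformed_snapper_eq_sum_over_base
    {m r : ℕ} (rk : Finset (Fin (m + 1)) → ℕ) (hP : IsPolymatroid rk)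
    (hrank : rk Finset.univ = r) (hlast : rk {Fin.last m} = r)
    (a : (Fin (m + 1) → ℕ) → ℤ)
    (ha : (∑ᶠ (κ : Fin (m + 1) → ℕ) (_ : (fun i => (κ i : ℝ)) ∈ indepPolytope rk),
            ∏ i, binomLower (MvPolynomial.X i : MvPolynomial (Fin (m + 1)) ℚ) (κ i)) =
          ∑ᶠ (κ : Fin (m + 1) → ℕ) (_ : ∑ i, κ i ≤ r),
            MvPolynomial.C ((-1 : ℚ) ^ (r - ∑ i, κ i) * (a κ : ℚ)) *
              ∏ i, binomUpper (MvPolynomial.X i) (κ i)) :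
    (∑ᶠ (κ : Fin (m + 1) → ℕ) (_ : ∑ i, κ i ≤ r),
        MvPolynomial.monomial
          (Finsupp.equivFunOnFinite.symm (Fin.cons (r - ∑ i, κ i) κ)) ((a κ : ℚ))) =
      ∑ᶠ (κ : Fin (m + 1) → ℕ) (_ : (fun i => (κ i : ℝ)) ∈ basePolytope rk),
        (MvPolynomial.X (Fin.last m).succ : MvPolynomial (Fin (m + 2)) ℚ) ^ κ (Fin.last m) *
          ∏ j : Fin m,
            (if κ j.castSucc = 0 then 1
             else MvPolynomial.X j.castSucc.succ ^ κ j.castSucc +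
               MvPolynomial.X 0 * MvPolynomial.X j.castSucc.succ ^ (κ j.castSucc - 1)) := by
  obtain ⟨-, hmono, -⟩ := hP
  subst hrank
  have hfull : ∀ I, Fin.last m ∈ I → rk I = rk univ := fun I => rk_eq_of_mem hmono hlast
  have hcoeff : ∀ κ, ∑ i, κ i ≤ rk univ → a κ = #(baseLifts rk (Fin.last m) κ) :=
    fun κ => eq_card_baseLifts_of_finsum_eq hfull a ha
  rw [finsum_basePoint_prod_eq, ← finsum_monomial_card_baseLifts rk (Fin.last m)]
  refine finsum_congr fun κ => finsum_congr fun hκ => ?_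
  rw [hcoeff κ hκ, Int.cast_natCast]
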